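/- Let d be an odd positive integer, χ a Dirichlet character of conductor d, and w an odd positive integer. Then for all n ≥ 0: ∑_{l=0}^{d−1} (−1)^l χ(l) 𝓔_{n, λ, χ}(w x + w l) = w^n ∑_{l=0}^{d w − 1} (−1)^l χ(l) 𝓔_{n, λ/w, χ}(x + l/w), as polynomials in x over ℚ(λ). -/

import Mathlib

open scoped Nat

/-- The degenerate falling factorial `(x|λ)_n = x(x−λ)⋯(x−(n−1)λ)`. -/
noncomputable def degFall {R : Type*} [CommRing R] (x lam : R) (n : ℕ) : R :=
  ∏ j ∈ Finset.range n, (x - (j : R) * lam)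

/-- `(1+λt)^{y/λ} := ∑_{n≥0} (y|λ)_n tⁿ/n!` as a formal power series. -/
noncomputable def degSeries {R : Type*} [CommRing R] [Algebra ℚ R] (y lam : R) :
    PowerSeries R :=
  PowerSeries.mk fun n => (n ! : ℚ)⁻¹ • degFall y lam n

/-- The generating identity defining the generalized degenerate Euler polynomials
`𝓔_{n,λ,χ}(x)` attached to χ, with parameter `mu`:
`((1+μt)^{d/μ}+1)·∑ 𝓔_{n,μ,χ}(x) tⁿ/n! = 2(∑_{a<d}(−1)^a χ(a)(1+μt)^{a/μ})(1+μt)^{x/μ}`. -/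
noncomputable def genDegEulerRel (d : ℕ) (χ : DirichletCharacter ℂ d) (mu : ℂ)
    (E : ℕ → Polynomial ℂ) : Prop :=
  (degSeries (Polynomial.C (d : ℂ)) (Polynomial.C mu) + 1) *
      PowerSeries.mk (fun n => (n ! : ℂ)⁻¹ • E n)
    = 2 * ((∑ a ∈ Finset.range d,
        ((-1 : ℂ) ^ a * χ (a : ZMod d)) • degSeries (Polynomial.C (a : ℂ)) (Polynomial.C mu)) *
        degSeries Polynomial.X (Polynomial.C mu))

/-! Let `L` and `R` be the exponential generating functions in `t` of the two sides. Write
`e(y) = (1+λt)^{y/λ}`, so that `e(y) e(z) = e(y+z)`, and put `u = e(d)`,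
`A = ∑_{a<d} (-1)^a χ(a) e(a)`, `B = ∑_{a<d} (-1)^a χ(a) e(wa)`. The defining relation for `λ`
gives `(u+1)·L = 2·A·B·e(wx)`. The relation for `λ/w`, with `t` replaced by `wt`, gives
`(u^w+1)·R = 2·B·e(wx)·∑_{l<dw} (-1)^l χ(l) e(l)`. As `d` is odd and `χ` has period `d`,
that last sum is `A·∑_{j<w} (-u)^j`, and as `w` is odd, `(u+1)·∑_{j<w} (-u)^j = u^w+1`.
Hence `(u^w+1)·R = (u^w+1)·L`, and `u^w+1` is a unit since its constant term is `2`. -/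

open Finset

section degFall
variable {R : Type*} [CommRing R]

theorem degFall_succ (x lam : R) (n : ℕ) :
    degFall x lam (n + 1) = degFall x lam n * (x - n * lam) :=
  prod_range_succ _ _

theorem degFall_add (x y lam : R) (n : ℕ) :
    degFall (x + y) lam n =
      ∑ ij ∈ antidiagonal n, (n.choose ij.1 : R) * (degFall x lam ij.1 * degFall y lam ij.2) := by
  induction n with
  | zero => simp [degFall]
  | succ n ih =>
    rw [sum_antidiagonal_choose_succ_mul fun i j => degFall x lam i * degFall y lam j,
      degFall_succ, ih, sum_mul, ← sum_add_distrib]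
    refine sum_congr rfl fun ij hij => ?_
    -- for `i + j = n`, the new factor splits as `(x + y) - nλ = (x - iλ) + (y - jλ)`
    have hn : (n : R) = ij.1 + ij.2 := by
      rw [← Nat.cast_add, mem_antidiagonal.mp hij]
    rw [← Nat.choose_symm_of_eq_add (mem_antidiagonal.mp hij).symm, degFall_succ, degFall_succ, hn]
    ring

theorem degFall_mul_mul (c x lam : R) (n : ℕ) :
    degFall (c * x) (c * lam) n = c ^ n * degFall x lam n := by
  rw [degFall, degFall, ← card_range n, ← prod_const, card_range, ← prod_mul_distrib]
  exact prod_congr rfl fun j _ => by ring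

theorem map_degFall {S : Type*} [CommRing S] (f : R →+* S) (x lam : R) (n : ℕ) :
    f (degFall x lam n) = degFall (f x) (f lam) n := by
  simp [degFall, map_prod]

end degFall

section degSeries
variable {R : Type*} [CommRing R] [Algebra ℚ R]

@[simp]
theorem coeff_degSeries (y lam : R) (n : ℕ) :
    PowerSeries.coeff n (degSeries y lam) = (n ! : ℚ)⁻¹ • degFall y lam n :=
  PowerSeries.coeff_mk _ _

theorem degSeries_zero (lam : R) : degSeries 0 lam = 1 := by
  ext (_ | n) <;> simp [degFall, prod_range_succ', PowerSeries.coeff_one]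

theorem degSeries_add (x y lam : R) :
    degSeries (x + y) lam = degSeries x lam * degSeries y lam := by
  ext n
  rw [PowerSeries.coeff_mul, coeff_degSeries, degFall_add, smul_sum]
  refine sum_congr rfl fun ij hij => ?_
  obtain rfl := mem_antidiagonal.mp hij
  rw [coeff_degSeries, coeff_degSeries, smul_mul_smul_comm, ← nsmul_eq_mul,
    ← Nat.cast_smul_eq_nsmul ℚ, smul_smul, Nat.cast_add_choose]
  congr 1
  field_simp

theorem degSeries_natCast_mul (k : ℕ) (x lam : R) :
    degSeries (k * x) lam = degSeries x lam ^ k := by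
  induction k with
  | zero => simp [degSeries_zero]
  | succ k ih => rw [Nat.cast_succ, add_one_mul, degSeries_add, ih, pow_succ]

theorem rescale_degSeries (c x lam : R) :
    PowerSeries.rescale c (degSeries x lam) = degSeries (c * x) (c * lam) := by
  ext n
  simp [PowerSeries.coeff_rescale, degFall_mul_mul]

theorem map_degSeries {S : Type*} [CommRing S] [Algebra ℚ S] (f : R →+* S) (x lam : R) :
    PowerSeries.map f (degSeries x lam) = degSeries (f x) (f lam) := by
  ext n
  simp [← map_degFall, map_rat_smul]

theorem isUnit_degSeries_add_one (x lam : R) : IsUnit (degSeries x lam + 1) := by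
  rw [PowerSeries.isUnit_iff_constantCoeff, map_add,
    ← PowerSeries.coeff_zero_eq_constantCoeff_apply]
  have h2 : IsUnit (2 : R) := by
    simpa only [map_ofNat] using (isUnit_of_invertible (2 : ℚ)).map (algebraMap ℚ R)
  simpa [degFall, one_add_one_eq_two] using h2

end degSeries

section egf
variable (K : Type*) {A : Type*} [Field K] [CommRing A] [Algebra K A]

def egf (f : ℕ → A) : PowerSeries A :=
  PowerSeries.mk fun n => (n ! : K)⁻¹ • f n

variable {K}

@[simp]
theorem coeff_egf (f : ℕ → A) (n : ℕ) : PowerSeries.coeff n (egf K f) = (n ! : K)⁻¹ • f n :=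
  PowerSeries.coeff_mk _ _

theorem map_egf {B : Type*} [CommRing B] [Algebra K B] (g : A →ₐ[K] B) (f : ℕ → A) :
    PowerSeries.map (g : A →+* B) (egf K f) = egf K fun n => g (f n) := by
  ext n
  simp

theorem rescale_egf (c : K) (f : ℕ → A) :
    PowerSeries.rescale (algebraMap K A c) (egf K f) = egf K fun n => c ^ n • f n := by
  ext n
  simp [PowerSeries.coeff_rescale, ← map_pow, ← Algebra.smul_def]

theorem PowerSeries.map_smul {B : Type*} [CommRing B] [Algebra K B] (g : A →ₐ[K] B) (c : K)
    (f : PowerSeries A) : PowerSeries.map (g : A →+* B) (c • f) = c • PowerSeries.map g f := by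
  ext n
  simp

theorem PowerSeries.rescale_smul (a : A) (c : K) (f : PowerSeries A) :
    PowerSeries.rescale a (c • f) = c • PowerSeries.rescale a f := by
  ext n
  simp [PowerSeries.coeff_rescale]

end egf

theorem sum_range_mul_eq_sum_sum {M : Type*} [AddCommMonoid M] (d w : ℕ) (f : ℕ → M) :
    ∑ l ∈ range (d * w), f l = ∑ j ∈ range w, ∑ a ∈ range d, f (d * j + a) := by
  induction w with
  | zero => simp
  | succ w ih => rw [Nat.mul_succ, sum_range_add, ih, sum_range_succ]

theorem Odd.add_one_mul_geom_sum_neg {S : Type*} [CommRing S] {w : ℕ} (hw : Odd w) (u : S) :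
    (u + 1) * ∑ j ∈ range w, (-u) ^ j = u ^ w + 1 := by
  have := geom_sum_mul (-u) w
  rw [hw.neg_pow] at this
  linear_combination -this

section Euler
open Polynomial

variable {d : ℕ} (χ : DirichletCharacter ℂ d)

noncomputable def altChar (a : ℕ) : ℂ := (-1) ^ a * χ a

theorem altChar_mul_add (hd : Odd d) (j a : ℕ) :
    altChar χ (d * j + a) = (-1) ^ j * altChar χ a := by
  simp only [altChar, Nat.cast_add, Nat.cast_mul, ZMod.natCast_self, zero_mul, zero_add, pow_add,
    pow_mul, hd.neg_one_pow]
  ring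

theorem sum_range_mul_altChar_smul (hd : Odd d) {S : Type*} [CommRing S] [Algebra ℂ S] (u : S)
    (g : ℕ → S) (hg : ∀ j a, g (d * j + a) = u ^ j * g a) (w : ℕ) :
    ∑ l ∈ range (d * w), altChar χ l • g l =
      (∑ j ∈ range w, (-u) ^ j) * ∑ a ∈ range d, altChar χ a • g a := by
  rw [sum_range_mul_eq_sum_sum, sum_mul]
  refine sum_congr rfl fun j _ => ?_
  rw [mul_sum]
  refine sum_congr rfl fun a _ => ?_
  simp only [hg, altChar_mul_add χ hd, Algebra.smul_def, map_mul, map_pow, map_neg, map_one]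
  ring

noncomputable def eulerNumerator (mu : ℂ) : PowerSeries ℂ[X] :=
  ∑ a ∈ range d, altChar χ a • degSeries (C (a : ℂ)) (C mu)

theorem rescale_eulerNumerator (c mu : ℂ) :
    PowerSeries.rescale (C c) (eulerNumerator χ mu) =
      ∑ a ∈ range d, altChar χ a • degSeries (C (c * a)) (C (c * mu)) := by
  simp [eulerNumerator, map_sum, PowerSeries.rescale_smul, rescale_degSeries]

variable {χ} {mu : ℂ} {E : ℕ → ℂ[X]}

theorem genDegEulerRel_iff :
    genDegEulerRel d χ mu E ↔
      (degSeries (C (d : ℂ)) (C mu) + 1) * egf ℂ E =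
        2 * (eulerNumerator χ mu * degSeries X (C mu)) :=
  Iff.rfl

theorem genDegEulerRel.comp (h : genDegEulerRel d χ mu E) (q : ℂ[X]) :
    (degSeries (C (d : ℂ)) (C mu) + 1) * egf ℂ (fun n => (E n).comp q) =
      2 * (eulerNumerator χ mu * degSeries q (C mu)) := by
  have := congrArg (PowerSeries.map ((aeval q : ℂ[X] →ₐ[ℂ] ℂ[X]) : ℂ[X] →+* ℂ[X]))
    (genDegEulerRel_iff.mp h)
  simpa [eulerNumerator, map_sum, map_ofNat, PowerSeries.map_smul, map_degSeries, map_egf,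
    comp_eq_aeval] using this

theorem genDegEulerRel.sum_smul_comp (h : genDegEulerRel d χ mu E) (s : Finset ℕ) (c : ℕ → ℂ)
    (q : ℕ → ℂ[X]) :
    (degSeries (C (d : ℂ)) (C mu) + 1) * ∑ l ∈ s, c l • egf ℂ (fun n => (E n).comp (q l)) =
      2 * (eulerNumerator χ mu * ∑ l ∈ s, c l • degSeries (q l) (C mu)) := by
  simp only [mul_sum, mul_smul_comm, h.comp]

theorem genDegEulerRel.sum_smul_comp_rescale {w : ℕ} (hw0 : (w : ℂ) ≠ 0) {lam : ℂ}
    (h : genDegEulerRel d χ (lam / w) E) (s : Finset ℕ) (c : ℕ → ℂ) (q : ℕ → ℂ[X]) :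
    (degSeries (C (d : ℂ)) (C lam) ^ w + 1) *
        ∑ l ∈ s, c l • egf ℂ (fun n => (w : ℂ) ^ n • (E n).comp (q l)) =
      2 * ((∑ a ∈ range d, altChar χ a • degSeries (C ((w : ℂ) * a)) (C lam)) *
        ∑ l ∈ s, c l • degSeries (C (w : ℂ) * q l) (C lam)) := by
  have := congrArg (PowerSeries.rescale (algebraMap ℂ ℂ[X] w)) (h.sum_smul_comp s c q)
  simp only [map_mul, map_add, map_one, map_ofNat, map_sum, PowerSeries.rescale_smul,
    rescale_egf] at this
  simp only [algebraMap_eq, rescale_degSeries, rescale_eulerNumerator, ← C_mul,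
    mul_div_cancel₀ _ hw0] at this
  rwa [← degSeries_natCast_mul, ← map_natCast C w, ← C_mul]

theorem genDegEulerRel.egf_symmetry {w : ℕ} (hd : Odd d) (hw : Odd w) {lam : ℂ} {E' : ℕ → ℂ[X]}
    (hE : genDegEulerRel d χ lam E) (hE' : genDegEulerRel d χ (lam / w) E') :
    ∑ l ∈ range d, altChar χ l • egf ℂ (fun n => (E n).comp (C (w : ℂ) * X + C ((w : ℂ) * l))) =
      ∑ l ∈ range (d * w),
        altChar χ l • egf ℂ (fun n => (w : ℂ) ^ n • (E' n).comp (X + C ((l : ℂ) / w))) := by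
  have hw0 : (w : ℂ) ≠ 0 := Nat.cast_ne_zero.mpr hw.pos.ne'
  set u := degSeries (C (d : ℂ)) (C lam) with hu
  have hpow (k : ℕ) : degSeries (C (d : ℂ) * k) (C lam) = u ^ k := by
    rw [mul_comm, degSeries_natCast_mul]
  set B := ∑ a ∈ range d, altChar χ a • degSeries (C ((w : ℂ) * a)) (C lam)
  set ewX := degSeries (C (w : ℂ) * X) (C lam)
  have hL : (u + 1) * ∑ l ∈ range d,
      altChar χ l • egf ℂ (fun n => (E n).comp (C (w : ℂ) * X + C ((w : ℂ) * l))) =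
        2 * (eulerNumerator χ lam * B * ewX) := by
    rw [hu, hE.sum_smul_comp]
    simp only [degSeries_add, ← mul_smul_comm, ← mul_sum]
    ring
  have hR : (u ^ w + 1) * ∑ l ∈ range (d * w),
      altChar χ l • egf ℂ (fun n => (w : ℂ) ^ n • (E' n).comp (X + C ((l : ℂ) / w))) =
        2 * (B * ((∑ j ∈ range w, (-u) ^ j) * eulerNumerator χ lam) * ewX) := by
    have hsplit := sum_range_mul_altChar_smul χ hd u (fun l => degSeries (C (l : ℂ)) (C lam))
      (fun j a => by
        simp only [Nat.cast_add, Nat.cast_mul, C_add, C_mul, degSeries_add, ← hpow, map_natCast]) w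
    have hscale (l : ℕ) : C (w : ℂ) * (X + C ((l : ℂ) / w)) = C (w : ℂ) * X + C (l : ℂ) := by
      rw [mul_add, ← C_mul, mul_div_cancel₀ _ hw0]
    rw [hE'.sum_smul_comp_rescale hw0 _ _ fun l => X + C ((l : ℂ) / w)]
    simp only [hscale, degSeries_add, ← mul_smul_comm, ← mul_sum, hsplit]
    rw [eulerNumerator]
    ring
  refine (isUnit_degSeries_add_one (w * C (d : ℂ)) (C lam)).mul_left_cancel ?_
  rw [degSeries_natCast_mul, hR, ← hw.add_one_mul_geom_sum_neg, mul_right_comm, hL]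
  ring

end Euler

theorem genDegEuler_symmetry_w_one_general (d w : ℕ)
    (hd : Odd d) (hw : Odd w)
    (χ : DirichletCharacter ℂ d) (lam : ℂ)
    (E E' : ℕ → Polynomial ℂ)
    (hE : genDegEulerRel d χ lam E)
    (hE' : genDegEulerRel d χ (lam / w) E')
    (n : ℕ) :
    ∑ l ∈ Finset.range d,
        Polynomial.C ((-1 : ℂ) ^ l * χ (l : ZMod d)) *
          (E n).comp (Polynomial.C (w : ℂ) * Polynomial.X + Polynomial.C ((w : ℂ) * l))
      = Polynomial.C ((w : ℂ) ^ n) *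
          ∑ l ∈ Finset.range (d * w),
            Polynomial.C ((-1 : ℂ) ^ l * χ (l : ZMod d)) *
              (E' n).comp (Polynomial.X + Polynomial.C ((l : ℂ) / (w : ℂ))) := by
  have h := congrArg (PowerSeries.coeff n) (hE.egf_symmetry hd hw hE')
  simp only [map_sum, PowerSeries.coeff_smul, coeff_egf, smul_comm _ (n ! : ℂ)⁻¹, ← smul_sum] at h
  have hfac : (n ! : ℂ)⁻¹ ≠ 0 := inv_ne_zero (Nat.cast_ne_zero.mpr n.factorial_ne_zero)
  simpa [altChar, Polynomial.smul_eq_C_mul, mul_sum, mul_left_comm] using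
    smul_right_injective (Polynomial ℂ) hfac h

/-- the w₂ = 1 specialization of the symmetry identity:
`∑_{l<d} (−1)^l χ(l) 𝓔_{n,λ,χ}(wx + wl) = wⁿ ∑_{l<dw} (−1)^l χ(l) 𝓔_{n,λ/w,χ}(x + l/w)`,
as polynomials in x over ℂ. -/
theorem genDegEuler_symmetry_w_one (d w : ℕ) (hd0 : 0 < d) (hw0 : 0 < w)
    (hd : Odd d) (hw : Odd w)
    (χ : DirichletCharacter ℂ d) (hχ : χ.conductor = d) (lam : ℂ) (hlam : lam ≠ 0)
    (E E' : ℕ → Polynomial ℂ)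
    (hE : genDegEulerRel d χ lam E)
    (hE' : genDegEulerRel d χ (lam / w) E')
    (n : ℕ) :
    ∑ l ∈ Finset.range d,
        Polynomial.C ((-1 : ℂ) ^ l * χ (l : ZMod d)) *
          (E n).comp (Polynomial.C (w : ℂ) * Polynomial.X + Polynomial.C ((w : ℂ) * l))
      = Polynomial.C ((w : ℂ) ^ n) *
          ∑ l ∈ Finset.range (d * w),
            Polynomial.C ((-1 : ℂ) ^ l * χ (l : ZMod d)) *
              (E' n).comp (Polynomial.X + Polynomial.C ((l : ℂ) / (w : ℂ))) :=
  genDegEuler_symmetry_w_one_general d w hd hw χ lam E E' hE hE' n
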